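/- Let S ⊆ ℤ be finite with maximal subset-sum bound m = max(Σ(positive elements), -Σ(negative elements)), γ = 3/(4m), and for σ ∈ {0,1}ⁿ let R(σ) = R^{ε₁ s₁ γ}···R^{εₙ sₙ γ} be the product of rotation matrices where εᵢ = (-1)^{σᵢ}. Then R(σ) = I (the identity) if and only if Σ_{σᵢ=0} sᵢ = Σ_{σᵢ=1} sᵢ. -/
import Mathlib


open Matrix

noncomputable def rot (θ : ℝ) : Matrix (Fin 2) (Fin 2) ℝ :=
  !![Real.cos θ, -Real.sin θ; Real.sin θ, Real.cos θ]

lemma rot_zero : rot 0 = 1 := by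
  simp [rot, Matrix.one_fin_two]

lemma rot_add (a b : ℝ) : rot a * rot b = rot (a + b) := by
  ext i j
  fin_cases i <;> fin_cases j <;>
    simp [rot, Matrix.mul_apply, Fin.sum_univ_two, Real.cos_add, Real.sin_add] <;> ring

lemma prod_rot (l : List ℝ) : (l.map rot).prod = rot l.sum := by
  induction l with
  | nil => simp [rot_zero]
  | cons a l ih => simp [ih, rot_add]

lemma rot_eq_one_iff {θ : ℝ} (h1 : -(2 * Real.pi) < θ) (h2 : θ < 2 * Real.pi) :
    rot θ = 1 ↔ θ = 0 := by
  constructor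
  · intro h
    have hc : Real.cos θ = 1 := by
      have := congrArg (fun M : Matrix (Fin 2) (Fin 2) ℝ => M 0 0) h
      simpa [rot] using this
    exact (Real.cos_eq_one_iff_of_lt_of_lt h1 h2).1 hc
  · rintro rfl; exact rot_zero

lemma abs_eq_max_add (z : ℤ) : |z| = max z 0 + max (-z) 0 := by
  rcases le_total z 0 with h | h
  · rw [abs_of_nonpos h, max_eq_right h, max_eq_left (neg_nonneg.2 h), zero_add]
  · rw [abs_of_nonneg h, max_eq_left h, max_eq_right (neg_nonpos.2 h), add_zero]

theorem stmt_6 (n : ℕ) (s : Fin n → ℤ) (m : ℤ)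
    (hm : m = max (∑ i, max (s i) 0) (∑ i, max (-s i) 0)) (hmpos : 0 < m)
    (σ : Fin n → Bool) :
    (List.ofFn (fun i : Fin n =>
        rot ((if σ i then (-1 : ℝ) else 1) * (s i : ℝ) * (3 / (4 * (m : ℝ)))))).prod = 1 ↔
      (∑ i ∈ Finset.univ.filter (fun i => σ i = false), s i) =
        ∑ i ∈ Finset.univ.filter (fun i => σ i = true), s i := by
  set γ : ℝ := 3 / (4 * (m : ℝ)) with hγ
  have hmR : (0 : ℝ) < (m : ℝ) := by exact_mod_cast hmpos
  have hγpos : 0 < γ := by positivity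
  set A : ℤ := ∑ i ∈ Finset.univ.filter (fun i => σ i = false), s i with hA
  set B : ℤ := ∑ i ∈ Finset.univ.filter (fun i => σ i = true), s i with hB
  have hsum : (∑ i, (if σ i then (-1 : ℝ) else 1) * (s i : ℝ) * γ)
      = ((A : ℝ) - (B : ℝ)) * γ := by
    have eA : ∑ i ∈ Finset.univ.filter (fun i => σ i = false),
        (if σ i then (-1 : ℝ) else 1) * (s i : ℝ) * γ
        = ∑ i ∈ Finset.univ.filter (fun i => σ i = false), (s i : ℝ) * γ := by
      refine Finset.sum_congr rfl fun i hi => ?_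
      have h := (Finset.mem_filter.1 hi).2
      simp [h]
    have eB : ∑ i ∈ Finset.univ.filter (fun i => σ i = true),
        (if σ i then (-1 : ℝ) else 1) * (s i : ℝ) * γ
        = -∑ i ∈ Finset.univ.filter (fun i => σ i = true), (s i : ℝ) * γ := by
      rw [← Finset.sum_neg_distrib]
      refine Finset.sum_congr rfl fun i hi => ?_
      have h := (Finset.mem_filter.1 hi).2
      simp only [h, if_true]
      ring
    have hsplit := (Finset.sum_filter_add_sum_filter_not Finset.univ
      (fun i => σ i = true) (fun i => (if σ i then (-1 : ℝ) else 1) * (s i : ℝ) * γ))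
    simp only [Bool.not_eq_true] at hsplit
    rw [← hsplit, eA, eB, hA, hB]
    push_cast
    simp only [sub_mul, Finset.sum_mul]
    ring
  have hDbound : |A - B| ≤ 2 * m := by
    have h1 : |A - B| ≤ ∑ i, |s i| := by
      calc |A - B| ≤ |A| + |B| := abs_sub _ _
        _ ≤ (∑ i ∈ Finset.univ.filter (fun i => σ i = false), |s i|) +
            ∑ i ∈ Finset.univ.filter (fun i => σ i = true), |s i| := by
              rw [hA, hB]; gcongr <;> exact Finset.abs_sum_le_sum_abs _ _
        _ = (∑ i ∈ Finset.univ.filter (fun i => σ i = false), |s i|) +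
            ∑ i ∈ Finset.univ.filter (fun i => ¬ σ i = false), |s i| := by
              simp only [Bool.not_eq_false]
        _ = ∑ i, |s i| := Finset.sum_filter_add_sum_filter_not _ _ _
    have h2 : (∑ i, |s i|) ≤ 2 * m := by
      have he : (∑ i, |s i|) = (∑ i, max (s i) 0) + ∑ i, max (-s i) 0 := by
        rw [← Finset.sum_add_distrib]
        exact Finset.sum_congr rfl fun i _ => abs_eq_max_add (s i)
      rw [he, hm, two_mul]
      gcongr
      · exact le_max_left _ _
      · exact le_max_right _ _
    exact h1.trans h2
  have hθbound : |((A : ℝ) - (B : ℝ)) * γ| < 2 * Real.pi := by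
    have hDR : |(A : ℝ) - (B : ℝ)| ≤ 2 * (m : ℝ) := by
      have : ((|A - B| : ℤ) : ℝ) ≤ ((2 * m : ℤ) : ℝ) := by exact_mod_cast hDbound
      push_cast at this
      convert this using 2
    have hb : |((A : ℝ) - (B : ℝ)) * γ| ≤ 2 * (m : ℝ) * γ := by
      rw [abs_mul, abs_of_pos hγpos]
      gcongr
    have h32 : 2 * (m : ℝ) * γ = 3 / 2 := by
      rw [hγ]; field_simp; ring
    have hpi : (3 : ℝ) / 2 < 2 * Real.pi := by
      nlinarith [Real.pi_gt_three]
    calc |((A : ℝ) - (B : ℝ)) * γ| ≤ 2 * (m : ℝ) * γ := hb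
      _ = 3 / 2 := h32
      _ < 2 * Real.pi := hpi
  have hlist : (List.ofFn (fun i : Fin n =>
      rot ((if σ i then (-1 : ℝ) else 1) * (s i : ℝ) * γ))).prod
      = rot (((A : ℝ) - (B : ℝ)) * γ) := by
    have hmap : (List.ofFn (fun i : Fin n =>
        rot ((if σ i then (-1 : ℝ) else 1) * (s i : ℝ) * γ)))
        = (List.ofFn (fun i : Fin n =>
            (if σ i then (-1 : ℝ) else 1) * (s i : ℝ) * γ)).map rot := by
      rw [List.map_ofFn]; rfl
    rw [hmap, prod_rot, List.sum_ofFn, hsum]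
  rw [hlist, rot_eq_one_iff (by linarith [(abs_lt.1 hθbound).1]) (abs_lt.1 hθbound).2]
  constructor
  · intro h
    have h0 : (A : ℝ) - (B : ℝ) = 0 := by
      rcases mul_eq_zero.1 h with h | h
      · exact h
      · exact absurd h (ne_of_gt hγpos)
    have : A = B := by
      have : (A : ℝ) = (B : ℝ) := by linarith
      exact_mod_cast this
    exact this
  · intro h
    rw [show (A : ℝ) - (B : ℝ) = 0 by rw [h]; ring, zero_mul]
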